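/- Let G be a weighted cyclic monotone circuit and let u₁, u₂ ∈ V_in be two distinct inputs, neither belonging to V_out, which have the same set of out-neighbors, all of which are AND gates. Then every minimal satisfying evaluation α of G satisfies α(u₁) = α(u₂). -/
import Mathlib


/-- Gate types for a monotone circuit. -/
inductive Gate where
  | AND : Gate
  | OR : Gate
deriving DecidableEq

/-- A weighted cyclic monotone circuit: a directed graph with a set of outputs,
a gate-type function, and a cost function (costs are only meaningful on inputs). -/
structure Circuit (V : Type) where
  edge : V → V → Prop
  isOut : V → Prop
  gate : V → Gate
  cost : V → ℝ

namespace Circuit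

variable {V : Type}

/-- The inputs are the vertices of in-degree 0. -/
def IsInput (G : Circuit V) (u : V) : Prop := ∀ v, ¬ G.edge v u

/-- A valid evaluation: each non-input gate evaluates to its gate function applied to
the values of its in-neighbors. -/
def Valid (G : Circuit V) (α : V → Bool) : Prop :=
  ∀ u : V, ¬ G.IsInput u →
    (α u = true ↔
      match G.gate u with
      | Gate.AND => ∀ v, G.edge v u → α v = true
      | Gate.OR => ∃ v, G.edge v u ∧ α v = true)

/-- An evaluation satisfies the circuit if it is 1 on all outputs. -/
def Satisfies (G : Circuit V) (α : V → Bool) : Prop :=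
  ∀ u, G.isOut u → α u = true

/-- The restriction `α|_A`: equal to `α` on `A` and `0` (false) elsewhere. -/
noncomputable def restrict (α : V → Bool) (A : Set V) : V → Bool :=
  fun u => @ite _ (u ∈ A) (Classical.propDecidable _) (α u) false

/-- A minimal satisfying evaluation: valid, satisfying, and no restriction of its
true set to a proper subset is a valid satisfying evaluation. -/
def MinSat (G : Circuit V) (α : V → Bool) : Prop :=
  G.Valid α ∧ G.Satisfies α ∧
    ∀ A : Set V, A ⊂ {u | α u = true} →
      ¬ (G.Valid (restrict α A) ∧ G.Satisfies (restrict α A))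

/-- `α` is acyclic if the subgraph `G[α]` induced by the true vertices has no
directed cycle. -/
def EvalAcyclic (G : Circuit V) (α : V → Bool) : Prop :=
  ∀ u, ¬ Relation.TransGen (fun a b => G.edge a b ∧ α a = true ∧ α b = true) u u

end Circuit


lemma key_lemma {V : Type} (G : Circuit V) (u₁ u₂ : V)
    (h₁ : G.IsInput u₁) (hne : u₁ ≠ u₂)
    (ho₁ : ¬ G.isOut u₁)
    (hnbr : ∀ w, G.edge u₁ w ↔ G.edge u₂ w)
    (hand : ∀ w, G.edge u₁ w → G.gate w = Gate.AND)
    (α : V → Bool) (hα : G.MinSat α)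
    (ht : α u₁ = true) (hf : α u₂ = false) : False := by
  obtain ⟨hval, hsat, hmin⟩ := hα
  set A : Set V := {u | α u = true} \ {u₁} with hA
  set β := Circuit.restrict α A with hβdef
  have hout : ∀ w, G.edge u₁ w → α w = false := by
    intro w hw
    by_contra h
    have hwt : α w = true := by revert h; cases α w <;> simp
    have hninp : ¬ G.IsInput w := fun hi => hi u₁ hw
    have := (hval w hninp).mp hwt
    rw [hand w hw] at this
    have := this u₂ ((hnbr w).mp hw)
    rw [hf] at this; exact Bool.false_ne_true this
  have hβ : ∀ u, u ≠ u₁ → β u = α u := by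
    intro u hu
    simp only [hβdef, Circuit.restrict]
    split
    · rfl
    · rename_i hmem
      have : α u = false := by
        by_contra h
        have : α u = true := by revert h; cases α u <;> simp
        exact hmem ⟨this, hu⟩
      rw [this]
  have hβ₁ : β u₁ = false := by
    simp only [hβdef, Circuit.restrict]
    split
    · rename_i hmem; exact absurd rfl hmem.2
    · rfl
  have hβval : G.Valid β := by
    intro u hninp
    have hu : u ≠ u₁ := fun e => hninp (e ▸ h₁)
    rw [hβ u hu]
    by_cases hw : G.edge u₁ u
    · have hfu : α u = false := hout u hw
      rw [hfu, hand u hw]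
      constructor
      · intro h; exact absurd h Bool.false_ne_true
      · intro h
        have := h u₂ ((hnbr u).mp hw)
        rw [hβ u₂ (Ne.symm hne), hf] at this
        exact absurd this Bool.false_ne_true
    · have hvs : ∀ v, G.edge v u → β v = α v := by
        intro v hv
        exact hβ v (fun e => hw (e ▸ hv))
      rw [hval u hninp]
      cases hg : G.gate u
      · constructor
        · intro h v hv; rw [hvs v hv]; exact h v hv
        · intro h v hv; rw [← hvs v hv]; exact h v hv
      · constructor
        · rintro ⟨v, hv, hvt⟩; exact ⟨v, hv, by rw [hvs v hv]; exact hvt⟩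
        · rintro ⟨v, hv, hvt⟩; exact ⟨v, hv, by rw [← hvs v hv]; exact hvt⟩
  have hβsat : G.Satisfies β := by
    intro u hu
    rw [hβ u (fun e => ho₁ (e ▸ hu))]
    exact hsat u hu
  exact hmin A ⟨Set.diff_subset, fun hs => (hs ht).2 rfl⟩ ⟨hβval, hβsat⟩

/-- "collect variables": if `u₁ ≠ u₂` are inputs, neither an output,
with the same out-neighborhood consisting only of AND gates, then every minimal
satisfying evaluation gives them equal values. -/
theorem stmt16 {V : Type} [Fintype V] (G : Circuit V) (u₁ u₂ : V)
    (h₁ : G.IsInput u₁) (h₂ : G.IsInput u₂) (hne : u₁ ≠ u₂)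
    (ho₁ : ¬ G.isOut u₁) (ho₂ : ¬ G.isOut u₂)
    (hnbr : ∀ w, G.edge u₁ w ↔ G.edge u₂ w)
    (hand : ∀ w, G.edge u₁ w → G.gate w = Gate.AND)
    (α : V → Bool) (hα : G.MinSat α) :
    α u₁ = α u₂ := by
  cases h1 : α u₁ <;> cases h2 : α u₂
  · rfl
  · exact absurd (key_lemma G u₂ u₁ h₂ hne.symm ho₂
      (fun w => (hnbr w).symm) (fun w h => hand w ((hnbr w).mpr h)) α hα h2 h1) not_false
  · exact absurd (key_lemma G u₁ u₂ h₁ hne ho₁ hnbr hand α hα h1 h2) not_false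
  · rfl
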